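/- Define R¹(z,w) = (2/√π) e^{(z−w)²} ∫_{−c̃}^{c̃} e^{−t²} cos(2t(z−w)) dt for fixed c̃ > 0. Then ∂R¹/∂z (z,w) = (4/√π) e^{(z−w)²−c̃²} sin(2c̃(z−w)) for all complex z, w. -/

import Mathlib

open Real MeasureTheory

/-- `R¹(z,w) = (2/√π) e^{(z−w)²} ∫_{−c̃}^{c̃} e^{−t²} cos(2t(z−w)) dt`. -/
noncomputable def RoneAH (ct : ℝ) (z w : ℂ) : ℂ :=
  (2 / (Real.sqrt Real.pi : ℂ)) * Complex.exp ((z - w) ^ 2) *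
    ∫ t in (-ct)..ct, (Real.exp (-t ^ 2) : ℂ) * Complex.cos (2 * t * (z - w))

/-!
Writing `u = z - w`, the integrand is `e^{-u²}` times the even part in `t` of `exp ((u + t i)²)`.
Since `ζ ↦ exp (ζ²)` is entire, it has a primitive `G` on `ℂ`, and integrating along the vertical
segment from `u - c̃ i` to `u + c̃ i` gives `R¹(z, w) = (2/√π) (-i) (G (u + c̃ i) - G (u - c̃ i))`.
Differentiating in `z` leaves only the endpoint values `exp ((u ± c̃ i)²)`, whose difference is
`2 i e^{u² - c̃²} sin (2 c̃ u)`.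
-/

open Complex

theorem integral_mul_comp_add_mul {g G : ℂ → ℂ} (hG : ∀ ζ, HasDerivAt G (g ζ) ζ)
    (hg : Continuous g) (u v : ℂ) (a b : ℝ) :
    ∫ t in a..b, v * g (u + t * v) = G (u + b * v) - G (u + a * v) := by
  refine intervalIntegral.integral_eq_sub_of_hasDerivAt (f := fun t : ℝ => G (u + t * v))
    (fun t _ => ?_)
    (Continuous.intervalIntegrable (by fun_prop : Continuous fun t : ℝ => v * g (u + t * v)) _ _)
  have hline : HasDerivAt (fun s : ℝ => u + (s : ℂ) * v) v t := by
    simpa using ((hasDerivAt_id t).ofReal_comp.mul_const v).const_add u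
  exact ((hG (u + t * v)).comp t hline).congr_deriv (mul_comm _ _)

theorem exp_sq_mul_exp_neg_sq_mul_cos (u : ℂ) (t : ℝ) :
    cexp (u ^ 2) * ((Real.exp (-t ^ 2) : ℂ) * cos (2 * t * u))
      = (cexp ((u + t * I) ^ 2) + cexp ((u + t * -I) ^ 2)) / 2 := by
  have hplus : (u + t * I) ^ 2 = u ^ 2 + -(t : ℂ) ^ 2 + 2 * t * u * I := by
    linear_combination (t : ℂ) ^ 2 * I_sq
  have hminus : (u + t * -I) ^ 2 = u ^ 2 + -(t : ℂ) ^ 2 + -(2 * t * u) * I := by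
    linear_combination (t : ℂ) ^ 2 * I_sq
  simp only [hplus, hminus, Complex.exp_add, Complex.cos]
  push_cast
  ring

theorem exp_sq_add_mul_I_sub_exp_sq_sub_mul_I (u : ℂ) (c : ℝ) :
    cexp ((u + c * I) ^ 2) - cexp ((u - c * I) ^ 2)
      = 2 * I * cexp (u ^ 2 - (c : ℂ) ^ 2) * sin (2 * c * u) := by
  have hplus : (u + c * I) ^ 2 = u ^ 2 - (c : ℂ) ^ 2 + 2 * c * u * I := by
    linear_combination (c : ℂ) ^ 2 * I_sq
  have hminus : (u - c * I) ^ 2 = u ^ 2 - (c : ℂ) ^ 2 + -(2 * c * u) * I := by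
    linear_combination (c : ℂ) ^ 2 * I_sq
  rw [hplus, hminus, Complex.exp_add, Complex.exp_add, Complex.sin]
  linear_combination cexp (u ^ 2 - (c : ℂ) ^ 2) * (cexp (2 * c * u * I) - cexp (-(2 * c * u) * I))
    * I_sq

theorem RoneAH_eq_of_hasDerivAt {G : ℂ → ℂ} (hG : ∀ ζ, HasDerivAt G (cexp (ζ ^ 2)) ζ)
    (ct : ℝ) (z w : ℂ) :
    RoneAH ct z w
      = 2 / (Real.sqrt Real.pi : ℂ) * -I * (G (z - w + ct * I) - G (z - w - ct * I)) := by
  set u := z - w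
  have hcont : Continuous fun ζ : ℂ => cexp (ζ ^ 2) := by fun_prop
  have hup : ∫ t in (-ct)..ct, cexp ((u + t * I) ^ 2)
      = -I * (G (u + ct * I) - G (u - ct * I)) := by
    have := integral_mul_comp_add_mul hG hcont u I (-ct) ct
    rw [intervalIntegral.integral_const_mul,
      show u + ((-ct : ℝ) : ℂ) * I = u - ct * I by push_cast; ring] at this
    linear_combination -I * this + (∫ t in (-ct)..ct, cexp ((u + t * I) ^ 2)) * I_sq
  have hdown : ∫ t in (-ct)..ct, cexp ((u + t * -I) ^ 2)
      = -I * (G (u + ct * I) - G (u - ct * I)) := by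
    have := integral_mul_comp_add_mul hG hcont u (-I) (-ct) ct
    rw [intervalIntegral.integral_const_mul, show u + (ct : ℂ) * -I = u - ct * I by ring,
      show u + ((-ct : ℝ) : ℂ) * -I = u + ct * I by push_cast; ring] at this
    linear_combination I * this + (∫ t in (-ct)..ct, cexp ((u + t * -I) ^ 2)) * I_sq
  have hsum : cexp (u ^ 2) * ∫ t in (-ct)..ct, (Real.exp (-t ^ 2) : ℂ) * cos (2 * t * u)
      = ((∫ t in (-ct)..ct, cexp ((u + t * I) ^ 2))
          + ∫ t in (-ct)..ct, cexp ((u + t * -I) ^ 2)) / 2 := by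
    rw [← intervalIntegral.integral_const_mul, ← intervalIntegral.integral_add
      (by apply Continuous.intervalIntegrable; fun_prop)
      (by apply Continuous.intervalIntegrable; fun_prop),
      ← intervalIntegral.integral_div]
    exact intervalIntegral.integral_congr fun t _ => exp_sq_mul_exp_neg_sq_mul_cos u t
  rw [RoneAH, mul_assoc, hsum, hup, hdown]
  ring

theorem stmt_14_general (ct : ℝ) (z w : ℂ) :
    deriv (fun z' : ℂ => RoneAH ct z' w) z
      = (4 / (Real.sqrt Real.pi : ℂ)) * Complex.exp ((z - w) ^ 2 - (ct : ℂ) ^ 2) *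
        Complex.sin (2 * ct * (z - w)) := by
  obtain ⟨G, hG⟩ := (by fun_prop : Differentiable ℂ fun ζ : ℂ => cexp (ζ ^ 2)).isExactOn_univ
  replace hG : ∀ ζ, HasDerivAt G (cexp (ζ ^ 2)) ζ := fun ζ => hG ζ (Set.mem_univ ζ)
  have hshift (a : ℂ) : HasDerivAt (fun z' => G (z' - w + a)) (cexp ((z - w + a) ^ 2)) z := by
    have := (hG (z - w + a)).comp z (((hasDerivAt_id z).sub_const w).add_const a)
    rwa [mul_one] at this
  have hR : HasDerivAt (fun z' => RoneAH ct z' w) (2 / (Real.sqrt Real.pi : ℂ) * -I *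
      (cexp ((z - w + ct * I) ^ 2) - cexp ((z - w - ct * I) ^ 2))) z := by
    simp_rw [RoneAH_eq_of_hasDerivAt hG, sub_eq_add_neg _ ((ct : ℂ) * I)]
    exact ((hshift _).sub (hshift _)).const_mul _
  rw [hR.deriv, exp_sq_add_mul_I_sub_exp_sq_sub_mul_I]
  linear_combination (-2 / (Real.sqrt Real.pi : ℂ) * 2 * cexp ((z - w) ^ 2 - (ct : ℂ) ^ 2)
    * sin (2 * ct * (z - w))) * I_sq

/-- `∂R¹/∂z (z,w) = (4/√π) e^{(z−w)²−c̃²} sin(2c̃(z−w))`. -/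
theorem stmt_14 (ct : ℝ) (hct : 0 < ct) (z w : ℂ) :
    deriv (fun z' : ℂ => RoneAH ct z' w) z
      = (4 / (Real.sqrt Real.pi : ℂ)) * Complex.exp ((z - w) ^ 2 - (ct : ℂ) ^ 2) *
        Complex.sin (2 * ct * (z - w)) :=
  stmt_14_general ct z w
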